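/- arXiv:1211.1823 — 2 statements merged into one kernel-verified Lean document; each statement's English description precedes it below -/
import Mathlib

section
/- For any real numbers α and any k ≥ 1, the function v_k(β) = ∫_0^{P} e(β γ^k) dγ satisfies |v_k(β)| ≤ min(P, C·P·(1 + |β| P^k)^{-1/k}) for an absolute constant C depending only on k. -/
/-!
Split `∫₀^P e(βγ^k) dγ` at `a = |β|^(-1/k)`, the point where the phase `βγ^k` has size one.
On `[0, a]` the integrand has modulus one. On `[a, P]` write `e(βγ^k) = γ^(1-k) · γ^(k-1) e(βγ^k)`,
where `γ^(k-1) e(βγ^k)` is the derivative of `e(βγ^k) / (2πikβ)`; since `γ^(1-k)` is positive and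
decreasing, integration by parts bounds this piece by `a^(1-k) / (πk|β|) = a / (πk)`.
Together with the trivial bound `P` this gives `min P (2|β|^(-1/k))`, and
`(1 + |β|P^k)^(-1/k)` is comparable to `min 1 ((|β|P^k)^(-1/k))`.
-/

open MeasureTheory Set Real Complex

theorem norm_integral_smul_deriv_le_of_antitone {E : Type*} [NormedAddCommGroup E]
    [NormedSpace ℝ E] [CompleteSpace E] {u u' : ℝ → ℝ} {v v' : ℝ → E} {a b M : ℝ}
    (hab : a ≤ b) (hu : ∀ x ∈ Icc a b, HasDerivAt u (u' x) x)
    (hv : ∀ x ∈ Icc a b, HasDerivAt v (v' x) x) (hu'int : IntervalIntegrable u' volume a b)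
    (hv'int : IntervalIntegrable v' volume a b) (hu'_nonpos : ∀ x ∈ Icc a b, u' x ≤ 0)
    (hub : 0 ≤ u b) (hvM : ∀ x ∈ Icc a b, ‖v x‖ ≤ M) :
    ‖∫ x in a..b, u x • v' x‖ ≤ 2 * M * u a := by
  rw [← uIcc_of_le hab] at hu hv
  have hdrop : ∫ x in a..b, -u' x = u a - u b := by
    rw [intervalIntegral.integral_neg, intervalIntegral.integral_eq_sub_of_hasDerivAt hu hu'int]
    ring
  have hua : u b ≤ u a := by
    have : 0 ≤ ∫ x in a..b, -u' x :=
      intervalIntegral.integral_nonneg hab fun x hx => neg_nonneg.2 (hu'_nonpos x hx)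
    linarith
  have hrest : ‖∫ x in a..b, u' x • v x‖ ≤ (u a - u b) * M := by
    rw [← hdrop, ← intervalIntegral.integral_mul_const]
    refine intervalIntegral.norm_integral_le_of_norm_le hab
      (Filter.Eventually.of_forall fun x hx => ?_) (hu'int.neg.mul_const M)
    have hx := Ioc_subset_Icc_self hx
    rw [norm_smul, Real.norm_of_nonpos (hu'_nonpos x hx)]
    exact mul_le_mul_of_nonneg_left (hvM x hx) (neg_nonneg.2 (hu'_nonpos x hx))
  rw [intervalIntegral.integral_smul_deriv_eq_deriv_smul hu hv hu'int hv'int]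
  calc ‖u b • v b - u a • v a - ∫ x in a..b, u' x • v x‖
      ≤ ‖u b • v b‖ + ‖u a • v a‖ + ‖∫ x in a..b, u' x • v x‖ :=
        (norm_sub_le _ _).trans (add_le_add_left (norm_sub_le _ _) _)
    _ ≤ u b * M + u a * M + (u a - u b) * M := by
      rw [norm_smul, norm_smul, Real.norm_of_nonneg hub, Real.norm_of_nonneg (hub.trans hua)]
      have hvb := hvM b (right_mem_Icc.2 hab)
      have hva := hvM a (left_mem_Icc.2 hab)
      have hua0 := hub.trans hua
      gcongr
    _ = 2 * M * u a := by ring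

theorem norm_cexp_two_pi_I_mul_pow (β γ : ℝ) (k : ℕ) :
    ‖cexp (2 * π * I * (β * γ ^ k))‖ = 1 := by
  rw [show 2 * π * I * (β * γ ^ k) = ((2 * π * (β * γ ^ k) : ℝ) : ℂ) * I by push_cast; ring,
    norm_exp_ofReal_mul_I]

theorem norm_integral_cexp_two_pi_I_mul_pow_le_abs_sub (β : ℝ) (k : ℕ) (a b : ℝ) :
    ‖∫ γ in a..b, cexp (2 * π * I * (β * γ ^ k))‖ ≤ |b - a| := by
  simpa using intervalIntegral.norm_integral_le_of_norm_le_const fun γ _ =>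
    (norm_cexp_two_pi_I_mul_pow β γ k).le

theorem hasDerivAt_cexp_two_pi_I_mul_pow (β : ℝ) (k : ℕ) (x : ℝ) :
    HasDerivAt (fun γ : ℝ => cexp (2 * π * I * (β * γ ^ k)))
      (2 * π * I * (k * β) * x ^ (k - 1) * cexp (2 * π * I * (β * x ^ k))) x := by
  have h := (((hasDerivAt_pow k (x : ℂ)).comp_ofReal).const_mul (2 * π * I * β)).cexp
  simp only [mul_assoc] at h ⊢
  convert h using 1
  ring

theorem norm_integral_cexp_two_pi_I_mul_pow_le_rpow_div {k : ℕ} (hk : 1 ≤ k) {β a b : ℝ}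
    (hβ : β ≠ 0) (ha : 0 < a) (hab : a ≤ b) :
    ‖∫ γ in a..b, cexp (2 * π * I * (β * γ ^ k))‖ ≤ a ^ (1 - k : ℝ) / (π * k * |β|) := by
  set c : ℂ := 2 * π * I * (k * β)
  have hc : c ≠ 0 := by simp [c, pi_ne_zero, hβ, show k ≠ 0 by omega]
  have hcn : ‖c‖ = 2 * π * k * |β| := by
    simp [c, abs_of_pos pi_pos]
    ring
  have hpos : ∀ x ∈ Icc a b, 0 < x := fun x hx => ha.trans_le hx.1
  have hfactor : ∀ x ∈ uIcc a b, cexp (2 * π * I * (β * x ^ k)) =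
      x ^ (1 - k : ℝ) • ((x : ℂ) ^ (k - 1) * cexp (2 * π * I * (β * x ^ k))) := by
    intro x hx
    rw [uIcc_of_le hab] at hx
    have hreal : x ^ (1 - k : ℝ) * x ^ (k - 1) = 1 := by
      rw [← rpow_natCast, ← rpow_add (hpos x hx), Nat.cast_sub hk]
      simp
    have : ((x ^ (1 - k : ℝ) : ℝ) : ℂ) * (x : ℂ) ^ (k - 1) = 1 := by exact_mod_cast hreal
    simp only [real_smul, ← mul_assoc, this, one_mul]
  rw [intervalIntegral.integral_congr hfactor]
  refine (norm_integral_smul_deriv_le_of_antitone (u := fun x => x ^ (1 - k : ℝ))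
    (u' := fun x => (1 - k) * x ^ (-k : ℝ))
    (v := fun x => c⁻¹ * cexp (2 * π * I * (β * x ^ k)))
    (v' := fun x => (x : ℂ) ^ (k - 1) * cexp (2 * π * I * (β * x ^ k))) (M := ‖c‖⁻¹)
    hab ?_ ?_ ?_ ?_ ?_ ?_ ?_).trans ?_
  · intro x hx
    simpa using hasDerivAt_rpow_const (p := 1 - k) (Or.inl (hpos x hx).ne')
  · intro x _
    refine ((hasDerivAt_cexp_two_pi_I_mul_pow β k x).const_mul c⁻¹).congr_deriv ?_
    rw [mul_assoc, inv_mul_cancel_left₀ hc]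
  · refine (continuousOn_const.mul
      (continuousOn_id.rpow_const fun x hx => Or.inl ?_)).intervalIntegrable
    exact (hpos x (uIcc_of_le hab ▸ hx)).ne'
  · exact (by fun_prop : Continuous _).intervalIntegrable _ _
  · exact fun x hx =>
      mul_nonpos_of_nonpos_of_nonneg (by simp [hk]) (rpow_nonneg (hpos x hx).le _)
  · exact rpow_nonneg (ha.trans_le hab).le _
  · intro x _
    rw [norm_mul, norm_inv, norm_cexp_two_pi_I_mul_pow, mul_one]
  · rw [hcn]
    apply le_of_eq
    field_simp

theorem norm_integral_zero_cexp_two_pi_I_mul_pow_le_two_mul_rpow {k : ℕ} (hk : 1 ≤ k) {β : ℝ}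
    (hβ : β ≠ 0) {P : ℝ} (hP : 0 ≤ P) :
    ‖∫ γ in (0 : ℝ)..P, cexp (2 * π * I * (β * γ ^ k))‖ ≤ 2 * |β| ^ (-(1 / k : ℝ)) := by
  set a := |β| ^ (-(1 / k : ℝ))
  have hβ0 : 0 < |β| := abs_pos.2 hβ
  have ha : 0 < a := rpow_pos_of_pos hβ0 _
  rcases le_or_gt P a with hPa | haP
  · calc _ ≤ |P - 0| := norm_integral_cexp_two_pi_I_mul_pow_le_abs_sub β k 0 P
      _ ≤ 2 * a := by rw [sub_zero, abs_of_nonneg hP]; linarith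
  have hpow : a ^ (1 - k : ℝ) = |β| * a := by
    have hk0 : (k : ℝ) ≠ 0 := by positivity
    rw [← rpow_mul hβ0.le, show -(1 / k : ℝ) * (1 - k) = 1 + -(1 / k) by field_simp; ring,
      rpow_add hβ0, rpow_one]
  have hπk : 1 ≤ π * k :=
    one_le_mul_of_one_le_of_one_le (by linarith [pi_gt_three]) (by exact_mod_cast hk)
  have hint : ∀ a b : ℝ,
      IntervalIntegrable (fun γ : ℝ => cexp (2 * π * I * (β * γ ^ k))) volume a b :=
    fun _ _ => (by fun_prop : Continuous _).intervalIntegrable _ _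
  rw [← intervalIntegral.integral_add_adjacent_intervals (hint 0 a) (hint a P)]
  calc _ ≤ ‖∫ γ in (0 : ℝ)..a, cexp (2 * π * I * (β * γ ^ k))‖
        + ‖∫ γ in a..P, cexp (2 * π * I * (β * γ ^ k))‖ := norm_add_le _ _
    _ ≤ |a - 0| + |β| * a / (π * k * |β|) := by
      rw [← hpow]
      gcongr
      · exact norm_integral_cexp_two_pi_I_mul_pow_le_abs_sub β k 0 a
      · exact norm_integral_cexp_two_pi_I_mul_pow_le_rpow_div hk hβ ha haP.le
    _ ≤ 2 * a := by
      rw [sub_zero, abs_of_pos ha, mul_comm (π * k), ← div_div, mul_div_cancel_left₀ a hβ0.ne']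
      linarith [div_le_self ha.le hπk]

theorem min_one_rpow_neg_le_two_mul_one_add_rpow_neg {s t : ℝ} (hs0 : 0 ≤ s) (hs1 : s ≤ 1)
    (ht : 0 ≤ t) : min 1 (t ^ (-s)) ≤ 2 * (1 + t) ^ (-s) := by
  have h2 : 1 / 2 ≤ (2 : ℝ) ^ (-s) := by
    rw [one_div, ← rpow_neg_one]
    exact rpow_le_rpow_of_exponent_le one_le_two (by linarith)
  rcases le_total t 1 with ht1 | ht1
  · calc min 1 (t ^ (-s)) ≤ 1 := min_le_left _ _
      _ ≤ 2 * 2 ^ (-s) := by linarith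
      _ ≤ 2 * (1 + t) ^ (-s) := mul_le_mul_of_nonneg_left
          (rpow_le_rpow_of_nonpos (by positivity) (by linarith) (by linarith)) zero_le_two
  · calc min 1 (t ^ (-s)) ≤ t ^ (-s) := min_le_right _ _
      _ ≤ 2 * 2 ^ (-s) * t ^ (-s) := le_mul_of_one_le_left (rpow_nonneg ht _) (by linarith)
      _ = 2 * (2 * t) ^ (-s) := by rw [mul_rpow zero_le_two ht, mul_assoc]
      _ ≤ 2 * (1 + t) ^ (-s) := mul_le_mul_of_nonneg_left
          (rpow_le_rpow_of_nonpos (by positivity) (by linarith) (by linarith)) zero_le_two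

theorem singular_integral_bound (k : ℕ) (hk : 1 ≤ k) :
    ∃ C : ℝ, 0 < C ∧ ∀ P : ℝ, 0 < P → ∀ β : ℝ,
      ‖∫ γ in (0:ℝ)..P, Complex.exp (2 * Real.pi * Complex.I * (β * γ ^ k))‖ ≤
        min P (C * P * (1 + |β| * P ^ k) ^ (-(1 / (k : ℝ)))) := by
  refine ⟨4, by norm_num, fun P hP β => ?_⟩
  have htrivial : ‖∫ γ in (0:ℝ)..P, cexp (2 * π * I * (β * γ ^ k))‖ ≤ P :=
    (norm_integral_cexp_two_pi_I_mul_pow_le_abs_sub β k 0 P).trans_eq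
      (by rw [sub_zero, abs_of_pos hP])
  refine le_min htrivial ?_
  rcases eq_or_ne β 0 with rfl | hβ
  · simpa using htrivial.trans (by linarith : P ≤ 4 * P)
  have hPk : (P ^ k) ^ (-(1 / k : ℝ)) = P⁻¹ := by
    rw [rpow_neg (by positivity), one_div, pow_rpow_inv_natCast hP.le (by omega)]
  calc _ ≤ min P (2 * |β| ^ (-(1 / k : ℝ))) :=
        le_min htrivial (norm_integral_zero_cexp_two_pi_I_mul_pow_le_two_mul_rpow hk hβ hP.le)
    _ ≤ 2 * P * min 1 (|β| ^ (-(1 / k : ℝ)) * P⁻¹) := by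
        rw [mul_min_of_nonneg _ _ (by positivity), mul_one]
        refine min_le_min (by linarith) (le_of_eq ?_)
        field_simp
    _ = 2 * P * min 1 ((|β| * P ^ k) ^ (-(1 / k : ℝ))) := by
        rw [mul_rpow (abs_nonneg β) (by positivity), hPk]
    _ ≤ 2 * P * (2 * (1 + |β| * P ^ k) ^ (-(1 / k : ℝ))) := by
        gcongr
        exact min_one_rpow_neg_le_two_mul_one_add_rpow_neg (by positivity)
          (div_le_one_of_le₀ (by exact_mod_cast hk) (by positivity)) (by positivity)
    _ = 4 * P * (1 + |β| * P ^ k) ^ (-(1 / k : ℝ)) := by ring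
end

section
/- Suppose that for every sufficiently large natural number n with 8 ∤ n, n ≢ 2 (mod 3), and n ≢ 14 (mod 16), n is the sum of two squares and three fourth powers. Then for every natural number k ≥ 1, every sufficiently large natural number M is the sum of two squares, three fourth powers and a k-th power. -/
/-!
Write `M = n + t ^ k`. If `t` is `0` or `1` modulo both `3` and `16`, so is `t ^ k`, and
`t ^ k ≡ t`; by the Chinese remainder theorem `t ∈ {1, 16, 33, 48}` realises all four pairs of
residues. Subtracting `1` modulo `3` exactly when `M ≡ 2 (mod 3)`, and `1` modulo `16` exactly
when `M ≡ 0, 8, 14 (mod 16)`, leaves an `n` meeting the congruence conditions of the hypothesis.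
-/

theorem pow_mod_eq_self_of_mod_le_one {t m k : ℕ} (hk : k ≠ 0) (ht : t % m ≤ 1) :
    t ^ k % m = t % m := by
  rw [Nat.pow_mod]
  rcases Nat.le_one_iff_eq_zero_or_eq_one.mp ht with h | h
  · simp [h, hk]
  · rw [h, one_pow, ← h, Nat.mod_mod]

theorem exists_pow_mod_three_sixteen {k a b : ℕ} (hk : k ≠ 0) (ha : a ≤ 1) (hb : b ≤ 1) :
    ∃ t ≤ 48, t ^ k % 3 = a ∧ t ^ k % 16 = b := by
  have realise : ∀ t ≤ 48, t % 3 = a → t % 16 = b → ∃ t ≤ 48, t ^ k % 3 = a ∧ t ^ k % 16 = b :=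
    fun t ht h3 h16 => ⟨t, ht, by rw [pow_mod_eq_self_of_mod_le_one hk (by omega), h3],
      by rw [pow_mod_eq_self_of_mod_le_one hk (by omega), h16]⟩
  interval_cases a <;> interval_cases b
  · exact realise 48 le_rfl rfl rfl
  · exact realise 33 (by norm_num) rfl rfl
  · exact realise 16 (by norm_num) rfl rfl
  · exact realise 1 (by norm_num) rfl rfl

theorem exists_shift_of_congruence_conditions (M : ℕ) :
    ∃ a b, a ≤ 1 ∧ b ≤ 1 ∧ ∀ n, (n + a) % 3 = M % 3 → (n + b) % 16 = M % 16 →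
      ¬ 8 ∣ n ∧ n % 3 ≠ 2 ∧ n % 16 ≠ 14 := by
  refine ⟨if M % 3 = 2 then 1 else 0,
    if M % 16 = 0 ∨ M % 16 = 8 ∨ M % 16 = 14 then 1 else 0, by split_ifs <;> omega,
    by split_ifs <;> omega, fun n h3 h16 => ?_⟩
  split_ifs at h3 h16 <;> omega

theorem corollary_from_theorem
    (hthm : ∃ n0 : ℕ, ∀ n : ℕ, n0 ≤ n → ¬ (8 ∣ n) → n % 3 ≠ 2 → n % 16 ≠ 14 →
      ∃ x1 x2 x3 x4 x5 : ℤ, (n : ℤ) = x1 ^ 2 + x2 ^ 2 + x3 ^ 4 + x4 ^ 4 + x5 ^ 4)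
    (k : ℕ) (hk : 1 ≤ k) :
    ∃ M0 : ℕ, ∀ M : ℕ, M0 ≤ M →
      ∃ (x1 x2 x3 x4 x5 : ℤ) (y : ℕ),
        (M : ℤ) = x1 ^ 2 + x2 ^ 2 + x3 ^ 4 + x4 ^ 4 + x5 ^ 4 + (y : ℤ) ^ k := by
  obtain ⟨n0, hn0⟩ := hthm
  refine ⟨n0 + 48 ^ k, fun M hM => ?_⟩
  obtain ⟨a, b, ha, hb, hcong⟩ := exists_shift_of_congruence_conditions M
  obtain ⟨t, ht, h3, h16⟩ := exists_pow_mod_three_sixteen (by omega : k ≠ 0) ha hb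
  have htk : t ^ k ≤ 48 ^ k := Nat.pow_le_pow_left ht k
  obtain ⟨h8, h3', h16'⟩ := hcong (M - t ^ k) (by omega) (by omega)
  obtain ⟨x1, x2, x3, x4, x5, hx⟩ := hn0 (M - t ^ k) (by omega) h8 h3' h16'
  refine ⟨x1, x2, x3, x4, x5, t, ?_⟩
  rw [← hx, ← Nat.cast_pow, ← Nat.cast_add, Nat.sub_add_cancel (by omega)]
end
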